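/- For every imaginary octonion p, one has [ad_{X_1}, ad_{D_p}] = −2·ad_{X_p} and [ad_{X_p}, ad_{D_p}] = 2·N(p)·ad_{X_1} as ℝ-linear operators on V (so in particular [X_p, D_p] acts as 2X_1 when N(p) = 1). -/

import Mathlib

noncomputable section

abbrev H := Quaternion ℝ

/-- The octonions 𝕆, as the Cayley–Dickson double of the quaternions:
pairs (a,b) of quaternions. -/
def Oct : Type := H × H

namespace Oct

instance : AddCommGroup Oct := inferInstanceAs (AddCommGroup (H × H))
instance : Module ℝ Oct := inferInstanceAs (Module ℝ (H × H))

def mk' (a b : H) : Oct := (a, b)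
def fst : Oct → H := Prod.fst
def snd : Oct → H := Prod.snd

/-- Cayley–Dickson multiplication: (a,b)·(c,d) = (ac − conj(d)b, da + b·conj(c)). -/
instance : Mul Oct :=
  ⟨fun p q => mk' (p.fst * q.fst - star q.snd * p.snd) (q.snd * p.fst + p.snd * star q.fst)⟩

instance : One Oct := ⟨mk' 1 0⟩

/-- Octonionic conjugation: conj (a,b) = (conj a, −b). -/
def conj (p : Oct) : Oct := mk' (star p.fst) (-p.snd)

/-- The real part of an octonion, as a real scalar. -/
def re (p : Oct) : ℝ := (p.fst).re

/-- The bilinear form ⟨x,y⟩ = (x·conj(y) + y·conj(x))/2, a real scalar. -/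
def oinner (p q : Oct) : ℝ := re (p * conj q + q * conj p) / 2

/-- The norm N(x) = x·conj(x), a real scalar. -/
def N (p : Oct) : ℝ := re (p * conj p)

/-- An octonion is imaginary if conj x = −x. -/
def IsIm (p : Oct) : Prop := conj p = -p

/-- The embedding of the reals into the octonions. -/
def oR (r : ℝ) : Oct := mk' (algebraMap ℝ H r) 0

end Oct

open Oct

abbrev M2 := Matrix (Fin 2) (Fin 2) Oct

/-- The traceless Hermitian 2×2 matrix P(z,a) = !![z, a; conj a, −z]. -/
def Pm (z : ℝ) (a : Oct) : M2 := !![oR z, a; conj a, -oR z]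

/-- The off-diagonal anti-Hermitian generator X_q = !![0, q; −conj q, 0]. -/
def Xm (q : Oct) : M2 := !![0, q; -conj q, 0]

/-- The diagonal generator D_q = !![q, 0; 0, −q]. -/
def Dm (q : Oct) : M2 := !![q, 0; 0, -q]

/-- The adjoint action ad_A : P ↦ AP − PA (entrywise octonion multiplication). -/
def ad (A : M2) : M2 → M2 := fun P => A * P - P * A

/-- The bracket of operators, [S,T] = S∘T − T∘S. -/
def br (S T : M2 → M2) : M2 → M2 := fun P => S (T P) - T (S P)

/-! On `V` everything can be computed in closed form: `ad_{X_q} P(z,a) = P(2⟨q,a⟩, -2zq)` for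
every `q`, and `ad_{D_p} P(z,a) = P(0, pa + ap)` for imaginary `p`. Hence
`[ad_{X_q}, ad_{D_p}] P(z,a) = P(2⟨q, pa + ap⟩, 2z(pq + qp))`, and both identities reduce to
`⟨1, pa + ap⟩ = -2⟨p,a⟩`, `⟨p, pa + ap⟩ = 2N(p) Re a` and `p² = -N(p)`. These follow from
`x·conj x = conj x·x = N(x)` and from the real part being cyclic and associative,
`Re(xy) = Re(yx)` and `Re((xy)z) = Re(x(yz))`, although `𝕆` itself is not associative. -/

open scoped Quaternion

namespace Oct

@[ext] lemma ext {x y : Oct} (h₁ : x.fst = y.fst) (h₂ : x.snd = y.snd) : x = y := Prod.ext h₁ h₂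

@[simp] lemma fst_zero : (0 : Oct).fst = 0 := rfl
@[simp] lemma snd_zero : (0 : Oct).snd = 0 := rfl
@[simp] lemma fst_one : (1 : Oct).fst = 1 := rfl
@[simp] lemma snd_one : (1 : Oct).snd = 0 := rfl
@[simp] lemma fst_add (x y : Oct) : (x + y).fst = x.fst + y.fst := rfl
@[simp] lemma snd_add (x y : Oct) : (x + y).snd = x.snd + y.snd := rfl
@[simp] lemma fst_neg (x : Oct) : (-x).fst = -x.fst := rfl
@[simp] lemma snd_neg (x : Oct) : (-x).snd = -x.snd := rfl
@[simp] lemma fst_sub (x y : Oct) : (x - y).fst = x.fst - y.fst := rfl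
@[simp] lemma snd_sub (x y : Oct) : (x - y).snd = x.snd - y.snd := rfl
@[simp] lemma fst_smul (r : ℝ) (x : Oct) : (r • x).fst = r • x.fst := rfl
@[simp] lemma snd_smul (r : ℝ) (x : Oct) : (r • x).snd = r • x.snd := rfl
@[simp] lemma fst_mul (x y : Oct) : (x * y).fst = x.fst * y.fst - star y.snd * x.snd := rfl
@[simp] lemma snd_mul (x y : Oct) : (x * y).snd = y.snd * x.fst + x.snd * star y.fst := rfl
@[simp] lemma fst_conj (x : Oct) : (conj x).fst = star x.fst := rfl
@[simp] lemma snd_conj (x : Oct) : (conj x).snd = -x.snd := rfl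
@[simp] lemma fst_oR (r : ℝ) : (oR r).fst = r := rfl
@[simp] lemma snd_oR (r : ℝ) : (oR r).snd = 0 := rfl
lemma re_def (x : Oct) : re x = x.fst.re := rfl

@[simp] protected lemma zero_mul (x : Oct) : 0 * x = 0 := by ext <;> simp

@[simp] protected lemma mul_zero (x : Oct) : x * 0 = 0 := by ext <;> simp

protected lemma one_mul (x : Oct) : 1 * x = x := by ext <;> simp

protected lemma mul_one (x : Oct) : x * 1 = x := by ext <;> simp

protected lemma mul_add (x y z : Oct) : x * (y + z) = x * y + x * z := by
  ext <;> simp <;> noncomm_ring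

@[simp] protected lemma neg_mul (x y : Oct) : -x * y = -(x * y) := by ext <;> simp <;> noncomm_ring

@[simp] protected lemma mul_neg (x y : Oct) : x * -y = -(x * y) := by ext <;> simp <;> noncomm_ring

protected lemma smul_mul_assoc (r : ℝ) (x y : Oct) : r • x * y = r • (x * y) := by
  ext <;> simp [smul_sub, smul_add]

protected lemma mul_smul_comm (r : ℝ) (x y : Oct) : x * r • y = r • (x * y) := by
  ext <;> simp [smul_sub, smul_add]

@[simp] lemma conj_add (x y : Oct) : conj (x + y) = conj x + conj y := by ext <;> simp [add_comm]
@[simp] lemma conj_neg (x : Oct) : conj (-x) = -conj x := by ext <;> simp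
@[simp] lemma conj_smul (r : ℝ) (x : Oct) : conj (r • x) = r • conj x := by ext <;> simp
@[simp] lemma conj_sub (x y : Oct) : conj (x - y) = conj x - conj y := by
  rw [sub_eq_add_neg, sub_eq_add_neg, conj_add, conj_neg]
@[simp] lemma conj_conj (x : Oct) : conj (conj x) = x := by ext <;> simp
@[simp] lemma conj_one : conj 1 = 1 := by ext <;> simp

lemma conj_mul (x y : Oct) : conj (x * y) = conj y * conj x := by
  ext <;> simp

@[simp] lemma oR_zero : oR 0 = 0 := by ext <;> simp

lemma oR_eq_smul_one (r : ℝ) : oR r = r • 1 := by ext <;> simp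

@[simp] lemma oR_mul (r : ℝ) (x : Oct) : oR r * x = r • x := by ext <;> simp <;> ring

@[simp] lemma mul_oR (x : Oct) (r : ℝ) : x * oR r = r • x := by ext <;> simp <;> ring

@[simp] lemma re_add (x y : Oct) : re (x + y) = re x + re y := by simp [re_def]
@[simp] lemma re_neg (x : Oct) : re (-x) = -re x := by simp [re_def]
@[simp] lemma re_smul (r : ℝ) (x : Oct) : re (r • x) = r * re x := by simp [re_def]
@[simp] lemma re_conj (x : Oct) : re (conj x) = re x := by simp [re_def]

lemma re_mul_comm (x y : Oct) : re (x * y) = re (y * x) := by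
  simp [re_def]; ring

lemma re_mul_assoc (x y z : Oct) : re (x * y * z) = re (x * (y * z)) := by
  simp [re_def]; ring

lemma add_conj (x : Oct) : x + conj x = oR (2 * re x) := by
  ext <;> simp [re_def]
  ring

lemma mul_conj_self (x : Oct) : x * conj x = oR (N x) := by
  ext <;> simp [N, re_def] <;> ring

lemma conj_mul_self (x : Oct) : conj x * x = oR (N x) := by
  ext <;> simp [N, re_def] <;> ring

lemma oinner_eq_re_mul_conj (x y : Oct) : oinner x y = re (x * conj y) := by
  rw [oinner, re_add, ← re_conj (y * conj x), conj_mul, conj_conj]; ring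

lemma oinner_eq_re_conj_mul (x y : Oct) : oinner x y = re (conj x * y) := by
  rw [oinner_eq_re_mul_conj, re_mul_comm, ← re_conj, conj_mul, conj_conj]

lemma oinner_one_left (x : Oct) : oinner 1 x = re x := by
  rw [oinner_eq_re_conj_mul, conj_one, Oct.one_mul]

lemma oinner_add_right (x y z : Oct) : oinner x (y + z) = oinner x y + oinner x z := by
  simp only [oinner_eq_re_conj_mul, Oct.mul_add, re_add]

lemma oinner_self_mul (p a : Oct) : oinner p (p * a) = N p * re a := by
  rw [oinner_eq_re_conj_mul, ← re_mul_assoc, conj_mul_self, oR_mul, re_smul]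

lemma oinner_mul_self (p a : Oct) : oinner p (a * p) = N p * re a := by
  rw [oinner_eq_re_conj_mul, re_mul_comm, re_mul_assoc, mul_conj_self, mul_oR, re_smul]

lemma IsIm.re_mul {p : Oct} (hp : IsIm p) (a : Oct) : re (p * a) = -oinner p a := by
  rw [oinner_eq_re_conj_mul, hp, Oct.neg_mul, re_neg, neg_neg]

lemma IsIm.mul_self {p : Oct} (hp : IsIm p) : p * p = -oR (N p) := by
  rw [← mul_conj_self, hp, Oct.mul_neg, neg_neg]

end Oct

lemma smul_Pm (r z : ℝ) (a : Oct) : r • Pm z a = Pm (r * z) (r • a) := by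
  simp [Pm, oR_eq_smul_one, mul_smul]

lemma Pm_sub_Pm (z w : ℝ) (a b : Oct) : Pm z a - Pm w b = Pm (z - w) (a - b) := by
  ext i j : 1; fin_cases i <;> fin_cases j <;> simp [Pm, oR_eq_smul_one] <;> module

lemma ad_Xm_Pm (q : Oct) (z : ℝ) (a : Oct) :
    ad (Xm q) (Pm z a) = Pm (2 * oinner q a) ((-2 * z) • q) := by
  have h₁₁ : q * conj a + a * conj q = oR (2 * oinner q a) := by
    rw [oinner_eq_re_mul_conj, ← add_conj, conj_mul, conj_conj]
  have h₂₂ : conj q * a + conj a * q = oR (2 * oinner q a) := by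
    rw [oinner_eq_re_conj_mul, ← add_conj, conj_mul, conj_conj]
  simp only [ad, Xm, Pm, Matrix.mul_fin_two]
  ext i j : 1; fin_cases i <;> fin_cases j <;> simp [h₁₁]
  · module
  · module
  · rw [← h₂₂]; abel

lemma ad_Dm_Pm {p : Oct} (hp : IsIm p) (z : ℝ) (a : Oct) :
    ad (Dm p) (Pm z a) = Pm 0 (p * a + a * p) := by
  simp only [ad, Dm, Pm, Matrix.mul_fin_two]
  ext i j : 1; fin_cases i <;> fin_cases j <;> simp
  rw [conj_mul, conj_mul, hp, Oct.mul_neg, Oct.neg_mul]; abel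

lemma br_ad_Xm_ad_Dm {p : Oct} (hp : IsIm p) (q : Oct) (z : ℝ) (a : Oct) :
    br (ad (Xm q)) (ad (Dm p)) (Pm z a) =
      Pm (2 * oinner q (p * a + a * p)) ((2 * z) • (p * q + q * p)) := by
  rw [br, ad_Dm_Pm hp, ad_Xm_Pm, ad_Xm_Pm, ad_Dm_Pm hp, Pm_sub_Pm]
  congr 1
  · ring
  · simp only [Oct.mul_smul_comm, Oct.smul_mul_assoc]; module

/-- For every imaginary octonion p: [ad_{X_1}, ad_{D_p}] = −2·ad_{X_p} and
[ad_{X_p}, ad_{D_p}] = 2·N(p)·ad_{X_1} as operators on V (so [X_p, D_p] acts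
as 2X_1 when N(p) = 1). -/
theorem bracket_with_Dp (p : Oct) (hp : IsIm p) :
    ∀ (z : ℝ) (a : Oct),
      br (ad (Xm 1)) (ad (Dm p)) (Pm z a) = (-2 : ℝ) • ad (Xm p) (Pm z a) ∧
      br (ad (Xm p)) (ad (Dm p)) (Pm z a) = (2 * N p) • ad (Xm 1) (Pm z a) := by
  intro z a
  rw [br_ad_Xm_ad_Dm hp, br_ad_Xm_ad_Dm hp, ad_Xm_Pm, ad_Xm_Pm, smul_Pm, smul_Pm]
  constructor
  · have hre : oinner 1 (p * a + a * p) = -2 * oinner p a := by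
      rw [oinner_one_left, re_add, re_mul_comm a, hp.re_mul]; ring
    rw [hre, Oct.mul_one, Oct.one_mul]
    congr 1 <;> [ring; module]
  · have hinner : oinner p (p * a + a * p) = 2 * N p * re a := by
      rw [oinner_add_right, oinner_self_mul, oinner_mul_self]; ring
    rw [hinner, hp.mul_self, oinner_one_left, oR_eq_smul_one]
    congr 1 <;> [ring; module]
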